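/- arXiv:2203.02880 — 2 statements merged into one kernel-verified Lean document; each statement's English description precedes it below -/
import Mathlib

section
/- For all x ∈ R, −log(1 − x + x²) ≤ ρ'(x) ≤ log(1 + x + x²), where ρ is the Huber function with parameter 1, so ρ'(x) = x for |x| ≤ 1 and ρ'(x) = sign(x) for |x| > 1. -/
/-- Derivative of the Huber loss with parameter 1: x for |x| ≤ 1 and sign(x) otherwise. -/
noncomputable def huberDeriv (x : ℝ) : ℝ := if |x| ≤ 1 then x else Real.sign x

lemma huberDeriv_upper (x : ℝ) : huberDeriv x ≤ Real.log (1 + x + x ^ 2) := by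
  have hpos : 0 < 1 + x + x ^ 2 := by nlinarith [sq_nonneg (2*x+1)]
  rw [huberDeriv]
  split_ifs with h
  · rw [Real.le_log_iff_exp_le hpos]
    have hb := Real.exp_bound h (n := 2) (by norm_num)
    simp [Finset.sum_range_succ] at hb
    have h2 : |x| ^ 2 = x ^ 2 := sq_abs x
    rw [abs_le] at hb
    nlinarith [hb.2, sq_nonneg x]
  · push_neg at h
    rcases lt_or_ge 0 x with hx | hx
    · have hx1 : 1 < x := by rcases abs_cases x with ⟨h1,_⟩|⟨h1,_⟩ <;> linarith
      rw [Real.sign_of_pos hx, Real.le_log_iff_exp_le hpos]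
      have := Real.exp_one_lt_d9
      nlinarith
    · have hx0 : x < 0 := by
        rcases hx.lt_or_eq with h'|h'
        · exact h'
        · exfalso; simp [h'] at h; linarith
      have hx1 : x < -1 := by rcases abs_cases x with ⟨h1,h2⟩|⟨h1,_⟩ <;> linarith
      rw [Real.sign_of_neg hx0, Real.le_log_iff_exp_le hpos]
      have : Real.exp (-1) < Real.exp 0 := Real.exp_lt_exp.mpr (by norm_num)
      rw [Real.exp_zero] at this
      nlinarith

lemma huberDeriv_neg (x : ℝ) : huberDeriv (-x) = -huberDeriv x := by
  rw [huberDeriv, huberDeriv, abs_neg, Real.sign_neg]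
  split_ifs <;> ring

/-- −log(1 − x + x²) ≤ ρ'(x) ≤ log(1 + x + x²). -/
theorem stmt7 (x : ℝ) :
    -Real.log (1 - x + x ^ 2) ≤ huberDeriv x ∧
    huberDeriv x ≤ Real.log (1 + x + x ^ 2) := by
  constructor
  · have := huberDeriv_upper (-x)
    rw [huberDeriv_neg] at this
    have he : 1 + -x + (-x) ^ 2 = 1 - x + x ^ 2 := by ring
    rw [he] at this
    linarith
  · exact huberDeriv_upper x
end

section
/- Let Y ∈ R^d be a random vector satisfying the L₄–L₂ norm equivalence with constant K, i.e., E⟨Y, v⟩⁴ ≤ K⁴ (E⟨Y, v⟩²)² for all v ∈ R^d, and suppose E Y = 0 with covariance Σ = E[YYᵀ]. Then E‖Y‖₂⁴ ≤ K⁴ (tr Σ)². -/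
open MeasureTheory BigOperators

lemma cs_int {Ω : Type*} [MeasurableSpace Ω] (μ : Measure Ω) {f g : Ω → ℝ}
    (hf2 : Integrable (fun ω => f ω ^ 2) μ) (hg2 : Integrable (fun ω => g ω ^ 2) μ)
    (hfg : Integrable (fun ω => f ω * g ω) μ) :
    (∫ ω, f ω * g ω ∂μ) ^ 2 ≤ (∫ ω, f ω ^ 2 ∂μ) * (∫ ω, g ω ^ 2 ∂μ) := by
  set A := ∫ ω, f ω ^ 2 ∂μ with hA
  set B := ∫ ω, f ω * g ω ∂μ with hB
  set C := ∫ ω, g ω ^ 2 ∂μ with hC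
  have key : ∀ t : ℝ, 0 ≤ A * (t * t) + (2 * B) * t + C := by
    intro t
    have h2 : 0 ≤ ∫ ω, (t * f ω + g ω) ^ 2 ∂μ := integral_nonneg fun ω => sq_nonneg _
    have heq : ∫ ω, (t * f ω + g ω) ^ 2 ∂μ
        = (t * t) * A + (2 * t) * B + C := by
      rw [show (fun ω => (t * f ω + g ω) ^ 2)
          = fun ω => (t * t) * f ω ^ 2 + ((2 * t) * (f ω * g ω) + g ω ^ 2)
          from funext fun ω => by ring]
      have hI : Integrable (fun ω => (2 * t) * (f ω * g ω) + g ω ^ 2) μ :=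
        (hfg.const_mul _).add hg2
      rw [integral_add (hf2.const_mul _) hI,
        integral_add (hfg.const_mul _) hg2,
        integral_const_mul, integral_const_mul, hA, hB, hC]
      ring
    rw [heq] at h2
    nlinarith [h2]
  have hd := discrim_le_zero key
  rw [discrim] at hd
  nlinarith [hd]

/-- If Y is a mean-zero random vector satisfying the L₄–L₂ norm equivalence with
constant K, then E‖Y‖₂⁴ ≤ K⁴ (tr Σ)², where tr Σ = ∑ᵢ E(Yᵢ²). -/
theorem stmt16 {d : ℕ} {Ω : Type*} [MeasurableSpace Ω]
    (μ : Measure Ω) [IsProbabilityMeasure μ]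
    (Y : Ω → Fin d → ℝ) (K : ℝ) (hK : 1 ≤ K)
    (hmeas : ∀ i, Measurable fun ω => Y ω i)
    (hint : ∀ i j k l : Fin d,
      Integrable (fun ω => Y ω i * Y ω j * Y ω k * Y ω l) μ)
    (hmean : ∀ i, ∫ ω, Y ω i ∂μ = 0)
    (hL4L2 : ∀ v : Fin d → ℝ,
      ∫ ω, (∑ i, v i * Y ω i) ^ 4 ∂μ ≤
        K ^ 4 * (∫ ω, (∑ i, v i * Y ω i) ^ 2 ∂μ) ^ 2) :
    ∫ ω, (∑ i, (Y ω i) ^ 2) ^ 2 ∂μ ≤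
      K ^ 4 * (∑ i, ∫ ω, (Y ω i) ^ 2 ∂μ) ^ 2 := by
  -- integrability of products of squares
  have hAint : ∀ i j : Fin d, Integrable (fun ω => Y ω i ^ 2 * Y ω j ^ 2) μ := by
    intro i j
    have := hint i i j j
    refine this.congr (Filter.Eventually.of_forall fun ω => ?_)
    ring
  set A : Fin d → ℝ := fun i => ∫ ω, Y ω i ^ 4 ∂μ with hAdef
  set B : Fin d → ℝ := fun i => ∫ ω, Y ω i ^ 2 ∂μ with hBdef
  have hBnn : ∀ i, 0 ≤ B i := fun i => integral_nonneg fun ω => sq_nonneg _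
  -- apply the L4-L2 hypothesis to basis vectors
  have hA4 : ∀ i, A i ≤ K ^ 4 * (B i) ^ 2 := by
    intro i
    have h := hL4L2 (Pi.single i 1)
    have hs : ∀ ω, (∑ j, (Pi.single i 1 : Fin d → ℝ) j * Y ω j) = Y ω i := by
      intro ω
      simp [Pi.single_apply]
    simp_rw [hs] at h
    exact h
  -- Cauchy–Schwarz for each pair
  have hcs : ∀ i j, ∫ ω, Y ω i ^ 2 * Y ω j ^ 2 ∂μ ≤ Real.sqrt (A i) * Real.sqrt (A j) := by
    intro i j
    have h2i : Integrable (fun ω => (Y ω i ^ 2) ^ 2) μ := by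
      have := hint i i i i
      refine this.congr (Filter.Eventually.of_forall fun ω => ?_); ring
    have h2j : Integrable (fun ω => (Y ω j ^ 2) ^ 2) μ := by
      have := hint j j j j
      refine this.congr (Filter.Eventually.of_forall fun ω => ?_); ring
    have h := cs_int μ h2i h2j (hAint i j)
    have hAi : ∫ ω, (Y ω i ^ 2) ^ 2 ∂μ = A i := by
      rw [hAdef]; congr 1; funext ω; ring
    have hAj : ∫ ω, (Y ω j ^ 2) ^ 2 ∂μ = A j := by
      rw [hAdef]; congr 1; funext ω; ring
    rw [hAi, hAj] at h
    have hnn : 0 ≤ ∫ ω, Y ω i ^ 2 * Y ω j ^ 2 ∂μ :=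
      integral_nonneg fun ω => mul_nonneg (sq_nonneg _) (sq_nonneg _)
    have := Real.sqrt_le_sqrt h
    calc ∫ ω, Y ω i ^ 2 * Y ω j ^ 2 ∂μ
        = Real.sqrt ((∫ ω, Y ω i ^ 2 * Y ω j ^ 2 ∂μ) ^ 2) := by
          rw [Real.sqrt_sq hnn]
      _ ≤ Real.sqrt (A i * A j) := Real.sqrt_le_sqrt h
      _ = Real.sqrt (A i) * Real.sqrt (A j) := Real.sqrt_mul
          (integral_nonneg fun ω => by positivity) _
  -- sqrt of fourth moment bounded by K^2 * second moment
  have hsA : ∀ i, Real.sqrt (A i) ≤ K ^ 2 * B i := by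
    intro i
    have h1 : A i ≤ (K ^ 2 * B i) ^ 2 := by
      have := hA4 i; nlinarith [hBnn i]
    calc Real.sqrt (A i) ≤ Real.sqrt ((K ^ 2 * B i) ^ 2) := Real.sqrt_le_sqrt h1
      _ = K ^ 2 * B i := Real.sqrt_sq (by positivity)
  -- expand the square of the sum
  have hexp : ∫ ω, (∑ i, (Y ω i) ^ 2) ^ 2 ∂μ
      = ∑ i, ∑ j, ∫ ω, Y ω i ^ 2 * Y ω j ^ 2 ∂μ := by
    have h1 : ∀ ω, (∑ i, (Y ω i) ^ 2) ^ 2 = ∑ i, ∑ j, Y ω i ^ 2 * Y ω j ^ 2 := by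
      intro ω
      rw [sq, Finset.sum_mul_sum]
    simp_rw [h1]
    rw [integral_finset_sum _ fun i _ => integrable_finset_sum _ fun j _ => hAint i j]
    exact Finset.sum_congr rfl fun i _ => integral_finset_sum _ fun j _ => hAint i j
  rw [hexp]
  calc ∑ i, ∑ j, ∫ ω, Y ω i ^ 2 * Y ω j ^ 2 ∂μ
      ≤ ∑ i, ∑ j, Real.sqrt (A i) * Real.sqrt (A j) :=
        Finset.sum_le_sum fun i _ => Finset.sum_le_sum fun j _ => hcs i j
    _ = (∑ i, Real.sqrt (A i)) ^ 2 := by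
        rw [sq, Finset.sum_mul_sum]
    _ ≤ (∑ i, K ^ 2 * B i) ^ 2 := by
        apply pow_le_pow_left₀
        · exact Finset.sum_nonneg fun i _ => Real.sqrt_nonneg _
        · exact Finset.sum_le_sum fun i _ => hsA i
    _ = K ^ 4 * (∑ i, B i) ^ 2 := by
        rw [← Finset.mul_sum]; ring
end
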